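/- Let q ≥ 2, t ≥ 1 be integers, k = q^t, r' = t+1, and n = k + r' + 1, and suppose n(q−1) is even. Then for every q-ary sequence x of length k there exist an index z with 0 ≤ z ≤ kq−1 and a symbol u ∈ {0,1,…,q−1} such that the concatenated sequence c = [u | E(d(z)) | x ⊕_q b(z)] of length n is balanced, i.e. u + w(E(d(z))) + w(x ⊕_q b(z)) = n(q−1)/2, where d(z) is the r'-digit base-q representation of z (most significant digit first) and E is the (r',q)-Gray encoding. -/

import Mathlib

/-- Weight of a q-ary sequence: sum of its symbols. -/
def wt {k : ℕ} (x : Fin k → ℕ) : ℕ := ∑ i, x i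

/-- Weighting sequence b(s,p): b_i = (s+1) mod q if i-1 < p, else s
    (indices here are 0-based, so the condition is i < p). -/
def bvec (q k s p : ℕ) : Fin k → ℕ := fun i => if (i : ℕ) < p then (s + 1) % q else s

/-- The z-th weighting sequence b(z) = b(s,p) where z = s·k + p, 0 ≤ p ≤ k-1. -/
def bz (q k z : ℕ) : Fin k → ℕ := bvec q k (z / k) (z % k)

/-- Symbol-wise addition modulo q. -/
def addq (q : ℕ) {k : ℕ} (x y : Fin k → ℕ) : Fin k → ℕ := fun i => (x i + y i) % q

/-- (r',q)-Gray encoding, with accumulator S = sum of already-produced Gray symbols: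
    g_i = d_i if S is even, g_i = q-1-d_i if S is odd.  E(d) = grayEnc q 0 d. -/
def grayEnc (q : ℕ) : ℕ → List ℕ → List ℕ
  | _, [] => []
  | S, d :: ds =>
      let g := if S % 2 = 0 then d else q - 1 - d
      g :: grayEnc q (S + g) ds

/-- The r-digit base-q representation of z, most significant digit first. -/
def digitsBE (q r z : ℕ) : List ℕ := (List.range r).map fun i => z / q ^ (r - 1 - i) % q

/-!
Let `h z` be the weight of `E(d(z))` plus that of `x ⊕_q b(z)`. Over `0 ≤ z < kq` the Gray part
averages `r'(q-1)/2` (at each position the Gray symbol runs through `0, …, q-1` as the digit does)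
and the second part averages `k(q-1)/2` (each coordinate of `x ⊕_q b(z)` hits every residue exactly
`k` times). So some `h z₁` is at most the mean `(n-1)(q-1)/2` and some `h z₂` at least it. Passing
from `z` to `z + 1` changes the Gray weight by `±1` and bumps one coordinate of `x ⊕_q b(z)` by one
modulo `q`, so `h` moves by at most `q` per step and must land in the window
`[n(q-1)/2 - (q-1), n(q-1)/2]` of width `q`; the prefix symbol `u` fills the remaining gap.
-/

open Finset

lemma sum_range_mul_eq_sum_sum (a b : ℕ) (f : ℕ → ℕ) :
    ∑ z ∈ range (a * b), f z = ∑ i ∈ range a, ∑ j ∈ range b, f (i * b + j) := by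
  induction a with
  | zero => simp
  | succ a ih => rw [sum_range_succ, ← ih, Nat.succ_mul, sum_range_add]

lemma sum_range_add_mod (q c : ℕ) [NeZero q] :
    ∑ s ∈ range q, (c + s) % q = ∑ s ∈ range q, s := by
  simp only [← Fin.sum_univ_eq_sum_range]
  calc ∑ s : Fin q, (c + (s : ℕ)) % q = ∑ s : Fin q, (Fin.ofNat q c + s).val := by
        simp [Fin.val_add]
    _ = ∑ s : Fin q, (s : ℕ) := Equiv.sum_comp (Equiv.addLeft (Fin.ofNat q c)) (fun s => (s : ℕ))

lemma digitsBE_succ (q r z : ℕ) :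
    digitsBE q (r + 1) z = z / q ^ r % q :: digitsBE q r (z % q ^ r) := by
  simp only [digitsBE, List.range_succ_eq_map, List.map_cons, List.map_map]
  refine List.cons_eq_cons.mpr ⟨by simp, List.map_congr_left fun i hi => ?_⟩
  have hi : i < r := List.mem_range.mp hi
  have hpow : q ^ r = q ^ (r - 1 - i) * q ^ (i + 1) := by rw [← pow_add]; congr 1; omega
  rw [Function.comp_apply, hpow, Nat.mod_mul_right_div_self,
    Nat.mod_mod_of_dvd _ (dvd_pow_self q (Nat.succ_ne_zero i))]
  congr 3
  omega

lemma digitsBE_mul_add {q r a m : ℕ} (ha : a < q) (hm : m < q ^ r) :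
    digitsBE q (r + 1) (a * q ^ r + m) = a :: digitsBE q r m := by
  have hpos : 0 < q ^ r := by omega
  rw [digitsBE_succ, Nat.add_comm, Nat.add_mul_div_right _ _ hpos, Nat.div_eq_of_lt hm,
    Nat.add_mul_mod_self_right, Nat.mod_eq_of_lt hm, Nat.zero_add, Nat.mod_eq_of_lt ha]

lemma digitsBE_zero (q r : ℕ) : digitsBE q r 0 = List.replicate r 0 := by
  simp [digitsBE]

lemma digitsBE_pow_sub_one {q : ℕ} (hq : 0 < q) (r : ℕ) :
    digitsBE q r (q ^ r - 1) = List.replicate r (q - 1) := by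
  induction r with
  | zero => rfl
  | succ r ih =>
    have hpos : 0 < q ^ r := pow_pos hq r
    have h : q ^ (r + 1) - 1 = (q - 1) * q ^ r + (q ^ r - 1) := by
      have := Nat.le_mul_of_pos_left (q ^ r) hq
      rw [pow_succ', Nat.sub_mul, one_mul]; omega
    rw [h, digitsBE_mul_add (by omega) (by omega), ih, List.replicate_succ]

def grayDigit (q S d : ℕ) : ℕ := if S % 2 = 0 then d else q - 1 - d

lemma grayEnc_cons (q S d : ℕ) (ds : List ℕ) :
    grayEnc q S (d :: ds) = grayDigit q S d :: grayEnc q (S + grayDigit q S d) ds := rfl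

lemma grayEnc_congr_parity (q : ℕ) (ds : List ℕ) {S S' : ℕ} (h : S % 2 = S' % 2) :
    grayEnc q S ds = grayEnc q S' ds := by
  induction ds generalizing S S' with
  | nil => rfl
  | cons d ds ih =>
    rw [grayEnc_cons, grayEnc_cons, grayDigit, grayDigit, h]
    exact congrArg _ (ih (by omega))

lemma grayEnc_replicate_sub_one (q n P : ℕ) :
    grayEnc q P (List.replicate n (q - 1)) = grayEnc q (P + 1) (List.replicate n 0) := by
  induction n generalizing P with
  | zero => rfl
  | succ n ih =>
    rw [List.replicate_succ, List.replicate_succ, grayEnc_cons, grayEnc_cons, ih]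
    have hd : grayDigit q P (q - 1) = grayDigit q (P + 1) 0 := by
      unfold grayDigit; split_ifs <;> omega
    rw [hd]
    exact congrArg _ (grayEnc_congr_parity q _ (by omega))

lemma sum_range_grayDigit (q S : ℕ) : ∑ a ∈ range q, grayDigit q S a = ∑ a ∈ range q, a := by
  unfold grayDigit
  split_ifs
  · rfl
  · exact sum_range_reflect id q

lemma sum_grayEnc_digitsBE_succ {q : ℕ} (hq : 0 < q) (r P z : ℕ) (hz : z + 1 < q ^ r) :
    (grayEnc q P (digitsBE q r (z + 1))).sum = (grayEnc q P (digitsBE q r z)).sum + 1 ∨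
    (grayEnc q P (digitsBE q r (z + 1))).sum + 1 = (grayEnc q P (digitsBE q r z)).sum := by
  induction r generalizing P z with
  | zero => simp at hz
  | succ r ih =>
    have hpos : 0 < q ^ r := pow_pos hq r
    obtain ⟨a, m, hm, rfl⟩ : ∃ a m, m < q ^ r ∧ z = a * q ^ r + m :=
      ⟨z / q ^ r, z % q ^ r, Nat.mod_lt _ hpos, by rw [Nat.mul_comm, Nat.div_add_mod]⟩
    rw [pow_succ'] at hz
    have ha : a < q := Nat.lt_of_mul_lt_mul_right (a := q ^ r) (by omega)
    rw [digitsBE_mul_add ha hm]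
    rcases Nat.lt_or_ge (m + 1) (q ^ r) with hm1 | hm1
    · rw [Nat.add_assoc, digitsBE_mul_add ha hm1, grayEnc_cons, grayEnc_cons,
        List.sum_cons, List.sum_cons]
      rcases ih (P + grayDigit q P a) m hm1 with h | h <;> omega
    · have hm' : m = q ^ r - 1 := by omega
      have ha1 : a + 1 < q := Nat.lt_of_mul_lt_mul_right (a := q ^ r) (by rw [Nat.succ_mul]; omega)
      have hz1 : a * q ^ r + m + 1 = (a + 1) * q ^ r + 0 := by rw [Nat.succ_mul]; omega
      rw [hz1, digitsBE_mul_add ha1 hpos, hm', digitsBE_pow_sub_one hq, digitsBE_zero,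
        grayEnc_cons, grayEnc_cons, List.sum_cons, List.sum_cons, grayEnc_replicate_sub_one,
        grayEnc_congr_parity q _ (S := P + grayDigit q P a + 1) (S' := P + grayDigit q P (a + 1))]
      · unfold grayDigit; split_ifs <;> omega
      · unfold grayDigit; split_ifs <;> omega

lemma two_mul_sum_grayEnc_digitsBE (q r P : ℕ) :
    2 * ∑ z ∈ range (q ^ r), (grayEnc q P (digitsBE q r z)).sum = q ^ r * (r * (q - 1)) := by
  induction r generalizing P with
  | zero => simp [digitsBE, grayEnc]
  | succ r ih =>
    have hsplit (a : ℕ) (ha : a ∈ range q) :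
        ∑ m ∈ range (q ^ r), (grayEnc q P (digitsBE q (r + 1) (a * q ^ r + m))).sum
          = q ^ r * grayDigit q P a
            + ∑ m ∈ range (q ^ r), (grayEnc q (P + grayDigit q P a) (digitsBE q r m)).sum := by
      have hterm (m : ℕ) (hm : m ∈ range (q ^ r)) :
          (grayEnc q P (digitsBE q (r + 1) (a * q ^ r + m))).sum
            = grayDigit q P a + (grayEnc q (P + grayDigit q P a) (digitsBE q r m)).sum := by
        rw [digitsBE_mul_add (mem_range.mp ha) (mem_range.mp hm), grayEnc_cons, List.sum_cons]
      rw [sum_congr rfl hterm, sum_add_distrib, sum_const, card_range, smul_eq_mul]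
    have hdigit : 2 * ∑ a ∈ range q, grayDigit q P a = q * (q - 1) := by
      rw [sum_range_grayDigit, Nat.mul_comm, sum_range_id_mul_two]
    calc 2 * ∑ z ∈ range (q ^ (r + 1)), (grayEnc q P (digitsBE q (r + 1) z)).sum
        = q ^ r * (2 * ∑ a ∈ range q, grayDigit q P a)
          + ∑ a ∈ range q, 2 * ∑ m ∈ range (q ^ r),
              (grayEnc q (P + grayDigit q P a) (digitsBE q r m)).sum := by
          rw [pow_succ', sum_range_mul_eq_sum_sum, sum_congr rfl hsplit, sum_add_distrib,
            ← mul_sum, ← mul_sum]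
          ring
      _ = q ^ (r + 1) * ((r + 1) * (q - 1)) := by
          rw [hdigit, sum_congr rfl fun a _ => ih (P + grayDigit q P a), sum_const, card_range,
            smul_eq_mul, pow_succ]
          ring

lemma bz_mul_add (q k s : ℕ) {p : ℕ} (hp : p < k) : bz q k (s * k + p) = bvec q k s p := by
  have hk : 0 < k := by omega
  rw [bz, Nat.add_comm, Nat.add_mul_div_right _ _ hk, Nat.div_eq_of_lt hp, Nat.zero_add,
    Nat.add_mul_mod_self_right, Nat.mod_eq_of_lt hp]

lemma sum_range_add_bvec_mod (q k c p : ℕ) [NeZero q] (i : Fin k) :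
    ∑ s ∈ range q, (c + bvec q k s p i) % q = ∑ s ∈ range q, s := by
  by_cases hi : (i : ℕ) < p
  · calc ∑ s ∈ range q, (c + bvec q k s p i) % q = ∑ s ∈ range q, (c + 1 + s) % q :=
          sum_congr rfl fun s _ => by rw [bvec, if_pos hi, Nat.add_mod_mod]; congr 1; omega
      _ = ∑ s ∈ range q, s := sum_range_add_mod q (c + 1)
  · simp only [bvec, if_neg hi]
    exact sum_range_add_mod q c

lemma sum_range_add_bz_mod (q k c : ℕ) [NeZero q] (i : Fin k) :
    ∑ z ∈ range (k * q), (c + bz q k z i) % q = k * ∑ s ∈ range q, s := by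
  rw [Nat.mul_comm, sum_range_mul_eq_sum_sum, sum_comm,
    sum_congr rfl fun p hp => ?_, sum_const, card_range, smul_eq_mul]
  simp only [bz_mul_add q k _ (mem_range.mp hp)]
  exact sum_range_add_bvec_mod q k c p i

lemma two_mul_sum_wt_addq_bz (q k : ℕ) [NeZero q] (x : Fin k → ℕ) :
    2 * ∑ z ∈ range (k * q), wt (addq q x (bz q k z)) = k * k * (q * (q - 1)) := by
  simp only [wt, addq]
  rw [sum_comm, sum_congr rfl fun i _ => sum_range_add_bz_mod q k (x i) i, sum_const, card_univ,
    Fintype.card_fin, smul_eq_mul, ← sum_range_id_mul_two]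
  ring

lemma exists_bz_succ_bump {q k z : ℕ} (hz : z + 1 < k * q) :
    ∃ j : Fin k, (∀ i ≠ j, bz q k (z + 1) i = bz q k z i) ∧
      bz q k (z + 1) j = (bz q k z j + 1) % q := by
  have hk : 0 < k := Nat.pos_of_ne_zero (by rintro rfl; simp at hz)
  obtain ⟨s, p, hp, rfl⟩ : ∃ s p, p < k ∧ z = s * k + p :=
    ⟨z / k, z % k, Nat.mod_lt _ hk, by rw [Nat.mul_comm, Nat.div_add_mod]⟩
  refine ⟨⟨p, hp⟩, ?_⟩
  have hne (i : Fin k) (hi : i ≠ ⟨p, hp⟩) : (i : ℕ) ≠ p := fun h => hi (Fin.ext h)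
  rcases Nat.lt_or_ge (p + 1) k with hp1 | hp1
  · rw [Nat.add_assoc, bz_mul_add q k s hp1, bz_mul_add q k s hp]
    refine ⟨fun i hi => ?_, by simp [bvec]⟩
    have := hne i hi
    simp only [bvec]
    split_ifs <;> first | rfl | omega
  · have hs : s + 1 < q :=
      Nat.lt_of_mul_lt_mul_right (a := k) (by rw [Nat.succ_mul, Nat.mul_comm q]; omega)
    have hz1 : s * k + p + 1 = (s + 1) * k + 0 := by rw [Nat.succ_mul]; omega
    rw [hz1, bz_mul_add q k (s + 1) hk, bz_mul_add q k s hp]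
    refine ⟨fun i hi => ?_, by simp [bvec, Nat.mod_eq_of_lt hs]⟩
    have := hne i hi
    have := i.isLt
    simp only [bvec, Nat.mod_eq_of_lt hs]
    split_ifs <;> first | rfl | omega

lemma sum_mod_bump {q k : ℕ} (hq : 1 < q) {y y' : Fin k → ℕ} (j : Fin k)
    (hne : ∀ i ≠ j, y' i = y i) (hj : y' j % q = (y j + 1) % q) :
    ∑ i, y' i % q = ∑ i, y i % q + 1 ∨ ∑ i, y' i % q + (q - 1) = ∑ i, y i % q := by
  have hrest : ∑ i ∈ univ.erase j, y' i % q = ∑ i ∈ univ.erase j, y i % q :=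
    sum_congr rfl fun i hi => by rw [hne i (ne_of_mem_erase hi)]
  rw [← add_sum_erase _ _ (mem_univ j), ← add_sum_erase _ _ (mem_univ j), hrest, hj,
    Nat.add_mod_eq_ite, Nat.mod_eq_of_lt hq]
  have := Nat.mod_lt (y j) (by omega : 0 < q)
  split_ifs <;> omega

lemma wt_addq_bz_succ {q k : ℕ} (hq : 1 < q) (x : Fin k → ℕ) {z : ℕ} (hz : z + 1 < k * q) :
    wt (addq q x (bz q k (z + 1))) = wt (addq q x (bz q k z)) + 1 ∨
      wt (addq q x (bz q k (z + 1))) + (q - 1) = wt (addq q x (bz q k z)) := by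
  obtain ⟨j, hne, hj⟩ := exists_bz_succ_bump hz
  refine sum_mod_bump hq j (fun i hi => by rw [hne i hi]) ?_
  rw [hj, Nat.add_mod_mod, Nat.add_assoc]

lemma exists_mem_Icc_of_step_le {f : ℕ → ℕ} {A B N a b : ℕ}
    (hstep : ∀ z, z + 1 < N → f (z + 1) ≤ f z + (B + 1 - A) ∧ f z ≤ f (z + 1) + (B + 1 - A))
    (ha : a < N) (hb : b < N) (hfa : f a ≤ B) (hfb : A ≤ f b) :
    ∃ z < N, A ≤ f z ∧ f z ≤ B := by
  by_contra! hgap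
  -- steps are too short to jump over `[A, B]`, so `f` stays on one side of it
  have hside (z : ℕ) (hz : z < N) : f z < A ↔ f 0 < A := by
    induction z with
    | zero => rfl
    | succ z ih =>
      have h₀ := hgap z (by omega)
      have h₁ := hgap (z + 1) hz
      have := hstep z hz
      rw [← ih (by omega)]
      omega
  have := hgap a ha
  have := hgap b hb
  have := hside a ha
  have := hside b hb
  omega

def codeWeight (q k r : ℕ) (x : Fin k → ℕ) (z : ℕ) : ℕ :=
  (grayEnc q 0 (digitsBE q r z)).sum + wt (addq q x (bz q k z))

lemma sum_two_mul_codeWeight {q k r : ℕ} [NeZero q] (x : Fin k → ℕ) (hkr : k * q = q ^ r) :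
    ∑ z ∈ range (k * q), 2 * codeWeight q k r x z = k * q * ((k + r) * (q - 1)) := by
  simp only [← mul_sum, codeWeight, sum_add_distrib, Nat.mul_add]
  rw [two_mul_sum_wt_addq_bz, hkr, two_mul_sum_grayEnc_digitsBE, ← hkr]
  ring

lemma codeWeight_succ_le {q k r : ℕ} (hq : 2 ≤ q) (x : Fin k → ℕ) (hkr : k * q = q ^ r)
    {z : ℕ} (hz : z + 1 < k * q) :
    codeWeight q k r x (z + 1) ≤ codeWeight q k r x z + q ∧
      codeWeight q k r x z ≤ codeWeight q k r x (z + 1) + q := by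
  have hgray := sum_grayEnc_digitsBE_succ (by omega) r 0 z (hkr ▸ hz)
  have hwt := wt_addq_bz_succ (by omega) x hz
  unfold codeWeight
  omega

theorem stmt15_general (q t k r' n : ℕ) (hq : 2 ≤ q)
    (hk : k = q ^ t) (hr' : r' = t + 1) (hn : n = k + r' + 1)
    (heven : Even (n * (q - 1)))
    (x : Fin k → ℕ) :
    ∃ z : ℕ, z ≤ k * q - 1 ∧ ∃ u : ℕ, u < q ∧
      2 * (u + (grayEnc q 0 (digitsBE q r' z)).sum + wt (addq q x (bz q k z)))
        = n * (q - 1) := by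
  have : NeZero q := ⟨by omega⟩
  have hkr : k * q = q ^ r' := by rw [hk, hr', pow_succ]
  have hne : (range (k * q)).Nonempty := nonempty_range_iff.mpr (hkr ▸ pow_ne_zero _ (by omega))
  obtain ⟨T, hT⟩ := heven
  have h2T : T + T = (k + r') * (q - 1) + (q - 1) := by rw [← hT, hn]; ring
  have hmean : ∑ z ∈ range (k * q), 2 * codeWeight q k r' x z
      = ∑ z ∈ range (k * q), (k + r') * (q - 1) := by
    rw [sum_two_mul_codeWeight x hkr, sum_const, card_range, smul_eq_mul]
  obtain ⟨z₁, hz₁, hle⟩ := exists_le_of_sum_le hne hmean.le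
  obtain ⟨z₂, hz₂, hge⟩ := exists_le_of_sum_le hne hmean.ge
  have hqT : q - 1 ≤ (k + r') * (q - 1) := Nat.le_mul_of_pos_left _ (by omega)
  obtain ⟨z, hz, hlo, hhi⟩ :=
    exists_mem_Icc_of_step_le (f := codeWeight q k r' x) (A := T - (q - 1)) (B := T)
      (fun z hz => by have := codeWeight_succ_le hq x hkr hz; omega)
      (mem_range.mp hz₁) (mem_range.mp hz₂) (by omega) (by omega)
  refine ⟨z, by omega, T - codeWeight q k r' x z, by omega, ?_⟩
  unfold codeWeight at hlo hhi ⊢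
  omega

/-- with k = q^t, r' = t+1, n = k+r'+1 and n(q-1) even, every q-ary
    sequence x of length k can be encoded as a balanced sequence
    c = [u | E(d(z)) | x ⊕_q b(z)] of length n, i.e. with
    u + w(E(d(z))) + w(x ⊕_q b(z)) = n(q-1)/2. -/
theorem stmt15 (q t k r' n : ℕ) (hq : 2 ≤ q) (ht : 1 ≤ t)
    (hk : k = q ^ t) (hr' : r' = t + 1) (hn : n = k + r' + 1)
    (heven : Even (n * (q - 1)))
    (x : Fin k → ℕ) (hx : ∀ i, x i < q) :
    ∃ z : ℕ, z ≤ k * q - 1 ∧ ∃ u : ℕ, u < q ∧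
      2 * (u + (grayEnc q 0 (digitsBE q r' z)).sum + wt (addq q x (bz q k z)))
        = n * (q - 1) :=
  stmt15_general q t k r' n hq hk hr' hn heven x
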